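/- arXiv:0707.0434 — 5 statements merged into one kernel-verified Lean document; each statement's English description precedes it below -/
import Mathlib

section
/- Let f₁, f₂, f₃ be pairwise relatively prime univariate polynomials over ℂ, not all constant, such that f₁ + f₂ + f₃ = 0. Then max(deg f₁, deg f₂, deg f₃) ≤ r(f₁f₂f₃) − 1, where r(g) denotes the number of distinct roots of g (equivalently, the degree of the radical of g). -/
/-!
This is the Mason–Stothers theorem `Polynomial.abc`. Over an algebraically closed field the
monic irreducible factors of `g` are the `X - a` for the distinct roots `a` of `g`, so the degree
of the radical is the number of distinct roots. The other alternative of `Polynomial.abc`, that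
all three derivatives vanish, makes the polynomials constant in characteristic zero.
-/

open Polynomial

/-- `rdeg g` = number of distinct complex roots of `g` (degree of its radical). -/
noncomputable def rdeg (g : ℂ[X]) : ℕ := g.roots.toFinset.card

open UniqueFactorizationMonoid

namespace Polynomial

variable {k : Type*} [Field k] [DecidableEq k]

lemma Splits.normalizedFactors_eq_map_roots {g : k[X]} (hg : g.Splits) :
    normalizedFactors g = g.roots.map (X - C ·) := by
  rcases eq_or_ne g 0 with rfl | hg₀
  · simp
  have hassoc : Associated (g.roots.map (X - C ·)).prod g := by
    conv_rhs => rw [hg.eq_prod_roots]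
    exact (associated_unit_mul_left _ _
      (isUnit_C.mpr (leadingCoeff_ne_zero.mpr hg₀).isUnit)).symm
  rw [← hassoc.normalizedFactors_eq, normalizedFactors_prod_eq _ fun p hp => by
    obtain ⟨a, -, rfl⟩ := Multiset.mem_map.mp hp
    exact irreducible_X_sub_C a, Multiset.map_map]
  exact Multiset.map_congr rfl fun a _ => (monic_X_sub_C a).normalize_eq_self

lemma Splits.natDegree_radical {g : k[X]} (hg : g.Splits) :
    (radical g).natDegree = g.roots.toFinset.card := by
  have hinj : Function.Injective fun a : k => X - C a := fun a b h => by
    simpa using congrArg (fun p => p.coeff 0) h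
  have hprimeFactors : primeFactors g = g.roots.toFinset.image (X - C ·) := by
    ext p
    simp [primeFactors, hg.normalizedFactors_eq_map_roots]
  rw [radical, hprimeFactors, Finset.prod_image fun a _ b _ h => hinj h,
    natDegree_prod _ _ fun a _ => X_sub_C_ne_zero a]
  simp

lemma natDegree_eq_zero_of_isCoprime_of_add_add_eq_zero {R : Type*} [CommRing R]
    [NoZeroDivisors R] {a b c : R[X]} (hab : IsCoprime a b) (hsum : a + b + c = 0)
    (hzero : a = 0 ∨ b = 0 ∨ c = 0) :
    a.natDegree = 0 ∧ b.natDegree = 0 ∧ c.natDegree = 0 := by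
  have hc : c = -(a + b) := eq_neg_of_add_eq_zero_right hsum
  rcases hzero with rfl | rfl | rfl
  · have hb := natDegree_eq_zero_of_isUnit (isCoprime_zero_left.mp hab)
    simp [hc, hb]
  · have ha := natDegree_eq_zero_of_isUnit (isCoprime_zero_right.mp hab)
    simp [hc, ha]
  · have hab' : a = -b := eq_neg_of_add_eq_zero_left (by simpa using hsum)
    subst hab'
    have hb := natDegree_eq_zero_of_isUnit
      (isCoprime_self.mp ((IsCoprime.neg_left_iff _ _).mp hab))
    simp [hb]

end Polynomial

theorem stmt0_general (f₁ f₂ f₃ : ℂ[X])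
    (h12 : IsCoprime f₁ f₂)
    (hconst : ¬ (f₁.natDegree = 0 ∧ f₂.natDegree = 0 ∧ f₃.natDegree = 0))
    (hsum : f₁ + f₂ + f₃ = 0) :
    max (max f₁.natDegree f₂.natDegree) f₃.natDegree + 1 ≤ rdeg (f₁ * f₂ * f₃) := by
  obtain ⟨h₁, h₂, h₃⟩ : f₁ ≠ 0 ∧ f₂ ≠ 0 ∧ f₃ ≠ 0 := by
    by_contra hzero
    simp only [not_and_or, not_not] at hzero
    exact hconst (natDegree_eq_zero_of_isCoprime_of_add_add_eq_zero h12 hsum hzero)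
  rw [rdeg, ← (IsAlgClosed.splits _).natDegree_radical]
  rcases Polynomial.abc h₁ h₂ h₃ h12 hsum with ⟨ha, hb, hc⟩ | ⟨ha, hb, hc⟩
  · omega
  · exact absurd ⟨derivative_eq_zero.mp ha, derivative_eq_zero.mp hb, derivative_eq_zero.mp hc⟩
      hconst

theorem stmt0 (f₁ f₂ f₃ : ℂ[X])
    (h12 : IsCoprime f₁ f₂) (h13 : IsCoprime f₁ f₃) (h23 : IsCoprime f₂ f₃)
    (hconst : ¬ (f₁.natDegree = 0 ∧ f₂.natDegree = 0 ∧ f₃.natDegree = 0))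
    (hsum : f₁ + f₂ + f₃ = 0) :
    max (max f₁.natDegree f₂.natDegree) f₃.natDegree + 1 ≤ rdeg (f₁ * f₂ * f₃) :=
  stmt0_general f₁ f₂ f₃ h12 hconst hsum
end

section
/- Let n ≥ 3 and f₁, …, fₙ be pairwise relatively prime univariate polynomials over ℂ, not all constant, with f₁ + f₂ + ⋯ + fₙ = 0. Then max₁≤m≤n deg fₘ ≤ (n−2)·(r(f₁f₂⋯fₙ) − 1), where r(g) is the number of distinct roots of g. -/
/-!
Fix `m`. Among the `f i` with `i ≠ m` choose a maximal linearly independent subfamily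
`g₁, …, g_k`; since `∑ f i = 0`, every `f i` lies in its span, and `k ≤ n - 1`. The Wronskian
`W = det (g_l^{(j)})` is nonzero because we are in characteristic zero. Replacing a row of the
Wronskian matrix by the derivatives of `f i` multiplies `W` by a nonzero constant, so every root of
`f i` of multiplicity `e` is a root of `W` of multiplicity at least `e - (k - 1)`. The `f i` being
pairwise coprime, these contributions add up:
`∑ i, (deg f i - (k - 1) r(f i)) ≤ deg W ≤ ∑ l, deg g_l - k(k - 1)/2 ≤ ∑ i ≠ m, deg f i - (k - 1)`,
which rearranges to `deg f m ≤ (k - 1) (∑ i, r(f i) - 1) ≤ (n - 2) (r(∏ f i) - 1)`.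
-/

open Polynomial

open Finset Function

lemma exists_linearIndependent_fin (K : Type*) {V ι : Type*} [DivisionRing K] [AddCommGroup V]
    [Module K V] [Finite ι] (v : ι → V) :
    ∃ (k : ℕ) (a : Fin k → ι), Injective a ∧
      Submodule.span K (Set.range (v ∘ a)) = Submodule.span K (Set.range v) ∧
      LinearIndependent K (v ∘ a) := by
  obtain ⟨κ, a, ha, hspan, hli⟩ := exists_linearIndependent' K v
  have := Finite.of_injective a ha
  let e := Finite.equivFin κ
  refine ⟨_, a ∘ e.symm, ha.comp e.symm.injective, ?_, hli.comp _ e.symm.injective⟩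
  rwa [← comp_assoc, EquivLike.range_comp]

lemma exists_linearIndependent_fin_of_sum_eq_zero (K : Type*) {V ι : Type*} [DivisionRing K]
    [AddCommGroup V] [Module K V] [Fintype ι] [DecidableEq ι] {v : ι → V} (hsum : ∑ i, v i = 0)
    (m : ι) :
    ∃ (k : ℕ) (χ : Fin k → {i // i ≠ m}), Injective χ ∧ LinearIndependent K (fun l => v (χ l)) ∧
      ∀ i, v i ∈ Submodule.span K (Set.range fun l => v (χ l)) := by
  obtain ⟨k, χ, hχ, hspan, hli⟩ := exists_linearIndependent_fin K fun i : {i // i ≠ m} => v i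
  refine ⟨k, χ, hχ, hli, fun i => ?_⟩
  change _ ∈ Submodule.span K (Set.range ((fun i : {i // i ≠ m} => v i) ∘ χ))
  rw [hspan]
  rcases eq_or_ne i m with rfl | hi
  · rw [Fintype.sum_eq_add_sum_subtype_ne _ i, add_eq_zero_iff_eq_neg] at hsum
    exact hsum ▸ neg_mem (sum_mem fun j _ => Submodule.subset_span ⟨j, rfl⟩)
  · exact Submodule.subset_span ⟨⟨i, hi⟩, rfl⟩

namespace Polynomial

lemma coeff_prod_sum_of_natDegree_le {R ι : Type*} [CommSemiring R] (s : Finset ι)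
    (f : ι → R[X]) (d : ι → ℕ) (h : ∀ i ∈ s, (f i).natDegree ≤ d i) :
    (∏ i ∈ s, f i).coeff (∑ i ∈ s, d i) = ∏ i ∈ s, (f i).coeff (d i) := by
  classical
  induction s using Finset.induction_on with
  | empty => simp
  | insert a s ha ih =>
    rw [prod_insert ha, sum_insert ha, prod_insert ha,
      coeff_mul_add_eq_of_natDegree_le (h a (mem_insert_self a s))
        ((natDegree_prod_le _ _).trans (sum_le_sum fun i hi => h i (mem_insert_of_mem hi))),
      ih fun i hi => h i (mem_insert_of_mem hi)]

section Wronskian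

variable {R : Type*} [CommRing R] {k : ℕ}

noncomputable def wronskianMatrix (g : Fin k → R[X]) : Matrix (Fin k) (Fin k) R[X] :=
  Matrix.of fun l j => derivative^[j] (g l)

@[simp]
lemma wronskianMatrix_apply (g : Fin k → R[X]) (l j : Fin k) :
    wronskianMatrix g l j = derivative^[j] (g l) := rfl

lemma sum_natDegree_perm_sub (g : Fin k → R[X]) (σ : Equiv.Perm (Fin k))
    (hσ : ∀ j : Fin k, (j : ℕ) ≤ (g (σ j)).natDegree) :
    ∑ j, ((g (σ j)).natDegree - j) = ∑ l, (g l).natDegree - ∑ j : Fin k, (j : ℕ) := by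
  rw [sum_tsub_distrib _ fun j _ => hσ j, Equiv.sum_comp σ fun l => (g l).natDegree]

lemma prod_wronskianMatrix_perm_eq_zero {g : Fin k → R[X]} {σ : Equiv.Perm (Fin k)} {j : Fin k}
    (hj : (g (σ j)).natDegree < j) : ∏ j, wronskianMatrix g (σ j) j = 0 :=
  prod_eq_zero (mem_univ j) (iterate_derivative_eq_zero hj)

lemma natDegree_prod_wronskianMatrix_perm_le (g : Fin k → R[X]) (σ : Equiv.Perm (Fin k)) :
    (∏ j, wronskianMatrix g (σ j) j).natDegree ≤
      ∑ l, (g l).natDegree - ∑ j : Fin k, (j : ℕ) := by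
  by_cases hσ : ∀ j : Fin k, (j : ℕ) ≤ (g (σ j)).natDegree
  · rw [← sum_natDegree_perm_sub g σ hσ]
    exact (natDegree_prod_le _ _).trans (sum_le_sum fun j _ => natDegree_iterate_derivative _ _)
  · push Not at hσ
    obtain ⟨j, hj⟩ := hσ
    rw [prod_wronskianMatrix_perm_eq_zero hj, natDegree_zero]
    exact Nat.zero_le _

lemma natDegree_det_wronskianMatrix_add_le {g : Fin k → R[X]} (hW : (wronskianMatrix g).det ≠ 0) :
    (wronskianMatrix g).det.natDegree + ∑ j : Fin k, (j : ℕ) ≤ ∑ l, (g l).natDegree := by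
  rw [Matrix.det_apply] at hW ⊢
  obtain ⟨σ, -, hσ⟩ := exists_ne_zero_of_sum_ne_zero hW
  have hσ' : ∀ j : Fin k, (j : ℕ) ≤ (g (σ j)).natDegree := fun j => by
    by_contra! hj
    exact hσ (by rw [prod_wronskianMatrix_perm_eq_zero hj, smul_zero])
  have hT : ∑ j : Fin k, (j : ℕ) ≤ ∑ l, (g l).natDegree :=
    (Equiv.sum_comp σ fun l => (g l).natDegree) ▸ sum_le_sum fun j _ => hσ' j
  have hdeg := natDegree_sum_le_of_forall_le univ _ fun τ _ =>
    (natDegree_smul_le (Equiv.Perm.sign τ) _).trans (natDegree_prod_wronskianMatrix_perm_le g τ)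
  omega

lemma coeff_det_wronskianMatrix (g : Fin k → R[X]) :
    (wronskianMatrix g).det.coeff (∑ l, (g l).natDegree - ∑ j : Fin k, (j : ℕ)) =
      (Matrix.of fun l (j : Fin k) =>
        ((g l).natDegree.descFactorial j : R) * (g l).leadingCoeff).det := by
  simp only [Matrix.det_apply, finsetSum_coeff, coeff_smul]
  refine sum_congr rfl fun σ _ => congrArg _ ?_
  by_cases hσ : ∀ j : Fin k, (j : ℕ) ≤ (g (σ j)).natDegree
  · simp only [← sum_natDegree_perm_sub g σ hσ, wronskianMatrix_apply]
    rw [coeff_prod_sum_of_natDegree_le _ _ _ fun j _ => natDegree_iterate_derivative _ _]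
    refine prod_congr rfl fun j _ => ?_
    rw [coeff_iterate_derivative, Nat.sub_add_cancel (hσ j), nsmul_eq_mul]
    rfl
  · push Not at hσ
    obtain ⟨j, hj⟩ := hσ
    rw [prod_wronskianMatrix_perm_eq_zero hj, coeff_zero, eq_comm]
    exact prod_eq_zero (mem_univ j) (by simp [Nat.descFactorial_eq_zero_iff_lt.mpr hj])

lemma det_descFactorial_mul_ne_zero [IsDomain R] [CharZero R] {d : Fin k → ℕ} (hd : Injective d)
    {c : Fin k → R} (hc : ∀ l, c l ≠ 0) :
    (Matrix.of fun l (j : Fin k) => ((d l).descFactorial j : R) * c l).det ≠ 0 := by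
  have hfac : (Matrix.of fun l (j : Fin k) => ((d l).descFactorial j : R) * c l) =
      Matrix.diagonal c * Matrix.of fun l (j : Fin k) => (descPochhammer R j).eval (d l : R) := by
    ext l j
    simp [Matrix.diagonal_mul, descPochhammer_eval_eq_descFactorial, mul_comm]
  rw [hfac, Matrix.det_mul, Matrix.det_diagonal,
    ← Matrix.det_eval_matrixOfPolynomials_eq_det_vandermonde (fun l => (d l : R)) _
      (fun j => descPochhammer_natDegree R j) (fun j => monic_descPochhammer R j)]
  exact mul_ne_zero (prod_ne_zero_iff.mpr fun l _ => hc l)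
    (Matrix.det_vandermonde_ne_zero_iff.mpr fun a b hab => hd (Nat.cast_injective hab))

lemma det_wronskianMatrix_ne_zero_of_injective [IsDomain R] [CharZero R] {g : Fin k → R[X]}
    (hg : ∀ l, g l ≠ 0) (hinj : Injective fun l => (g l).natDegree) :
    (wronskianMatrix g).det ≠ 0 := fun hW => by
  have h := coeff_det_wronskianMatrix g
  rw [hW, coeff_zero] at h
  exact det_descFactorial_mul_ne_zero hinj (fun l => leadingCoeff_ne_zero.mpr (hg l)) h.symm

lemma det_wronskianMatrix_update_sub_smul (g : Fin k → R[X]) {i j : Fin k} (hij : i ≠ j) (c : R) :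
    (wronskianMatrix (Function.update g i (g i - c • g j))).det = (wronskianMatrix g).det := by
  have hrow : wronskianMatrix (Function.update g i (g i - c • g j)) =
      (wronskianMatrix g).updateRow i (wronskianMatrix g i + (-C c) • wronskianMatrix g j) := by
    ext l t
    rcases eq_or_ne l i with rfl | hl
    · simp [smul_eq_C_mul, sub_eq_add_neg]
    · simp [hl]
  rw [hrow, Matrix.det_updateRow_add_smul_self _ hij]

end Wronskian

section Field

variable {K : Type*} [Field K] {k : ℕ}

lemma natDegree_sub_smul_lt {p q : K[X]} (hpq : p.natDegree = q.natDegree) (hq : q ≠ 0)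
    (h : p - (p.leadingCoeff / q.leadingCoeff) • q ≠ 0) :
    (p - (p.leadingCoeff / q.leadingCoeff) • q).natDegree < p.natDegree := by
  have hp : p ≠ 0 := fun hp => h (by simp [hp])
  have hlc : q.leadingCoeff ≠ 0 := leadingCoeff_ne_zero.mpr hq
  rw [smul_eq_C_mul] at h ⊢
  refine natDegree_lt_natDegree h (degree_sub_lt_left ?_ hp ?_)
  · rw [degree_C_mul (div_ne_zero (leadingCoeff_ne_zero.mpr hp) hlc), degree_eq_natDegree hp,
      degree_eq_natDegree hq, hpq]
  · rw [leadingCoeff_mul, leadingCoeff_C, div_mul_cancel₀ _ hlc]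

/-- Row operations `g i ↦ g i - c • g j` preserve both the Wronskian and linear independence, and
lower the total degree until all degrees are distinct, where the leading coefficient of the
Wronskian is a nonzero Vandermonde determinant. -/
theorem det_wronskianMatrix_ne_zero [CharZero K] {g : Fin k → K[X]} (hg : LinearIndependent K g) :
    (wronskianMatrix g).det ≠ 0 := by
  induction hN : ∑ l, (g l).natDegree using Nat.strong_induction_on generalizing g with
  | _ N ih =>
  by_cases hinj : Injective fun l => (g l).natDegree
  · exact det_wronskianMatrix_ne_zero_of_injective hg.ne_zero hinj
  obtain ⟨i, j, hij_deg, hij⟩ := Function.not_injective_iff.mp hinj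
  set c := (g i).leadingCoeff / (g j).leadingCoeff
  set g' := Function.update g i (g i - c • g j)
  have hg' : LinearIndependent K g' := by
    refine hg.update i _ ⟨1, one_mem _, Finsupp.single i 1 - Finsupp.single j c, ?_, ?_⟩
    · simp [hij.symm]
    · simp [map_sub, Finsupp.linearCombination_single]
  have hi : (g' i).natDegree < (g i).natDegree := by
    simpa [g'] using
      natDegree_sub_smul_lt hij_deg (hg.ne_zero j) (by simpa [g'] using hg'.ne_zero i)
  have hlt : ∑ l, (g' l).natDegree < N := by
    refine hN ▸ sum_lt_sum (fun l _ => ?_) ⟨i, mem_univ i, hi⟩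
    rcases eq_or_ne l i with rfl | hl
    · exact hi.le
    · simp [g', hl]
  rw [← det_wronskianMatrix_update_sub_smul g hij c]
  exact ih _ hlt hg' rfl

lemma dvd_det_wronskianMatrix_of_mem_span {p f : K[X]} {g : Fin k → K[X]}
    (hf : f ∈ Submodule.span K (Set.range g)) (hf0 : f ≠ 0)
    (hp : ∀ j < k, p ∣ derivative^[j] f) : p ∣ (wronskianMatrix g).det := by
  obtain ⟨c, rfl⟩ := Submodule.mem_span_range_iff_exists_fun K |>.mp hf
  obtain ⟨l, hl⟩ : ∃ l, c l ≠ 0 := by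
    by_contra! h
    simp [h] at hf0
  choose q hq using fun j : Fin k => hp j j.2
  have hrow : ∑ l, C (c l) • wronskianMatrix g l = p • q := by
    ext j
    simp [← hq j, iterate_derivative_sum, smul_eq_C_mul]
  have hdet := Matrix.det_updateRow_sum (wronskianMatrix g) l fun l => C (c l)
  rw [hrow, Matrix.det_updateRow_smul, smul_eq_mul] at hdet
  exact (isUnit_C.mpr (Ne.isUnit hl)).dvd_mul_left.mp ⟨_, hdet.symm⟩

variable [DecidableEq K]

noncomputable def highMultiplicityPart (e : ℕ) (f : K[X]) : K[X] :=
  ∏ a ∈ f.roots.toFinset, (X - C a) ^ (f.rootMultiplicity a - e)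

lemma highMultiplicityPart_ne_zero (e : ℕ) (f : K[X]) : highMultiplicityPart e f ≠ 0 :=
  prod_ne_zero_iff.mpr fun a _ => pow_ne_zero _ (X_sub_C_ne_zero a)

lemma highMultiplicityPart_dvd_iterate_derivative {e j : ℕ} (hj : j ≤ e) (f : K[X]) :
    highMultiplicityPart e f ∣ derivative^[j] f :=
  prod_dvd_of_coprime (fun _ _ _ _ hab => ((pairwise_coprime_X_sub_C injective_id) hab).pow)
    fun a _ => (pow_dvd_pow _ (Nat.sub_le_sub_left hj _)).trans
      (pow_sub_dvd_iterate_derivative_of_pow_dvd j (pow_rootMultiplicity_dvd f a))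

lemma card_roots_sub_le_natDegree_highMultiplicityPart (e : ℕ) (f : K[X]) :
    (f.roots.card : ℤ) - e * f.roots.toFinset.card ≤ (highMultiplicityPart e f).natDegree := by
  rw [highMultiplicityPart, natDegree_prod _ _ fun a _ => pow_ne_zero _ (X_sub_C_ne_zero a),
    ← Multiset.toFinset_sum_count_eq]
  calc _ = ∑ a ∈ f.roots.toFinset, ((f.roots.count a : ℤ) - e) := by
        push_cast
        rw [sum_sub_distrib, sum_const, nsmul_eq_mul, mul_comm]
    _ ≤ _ := by
        push_cast
        gcongr with a
        simp only [natDegree_pow, natDegree_X_sub_C, mul_one, count_roots]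
        omega

theorem sum_card_roots_sub_add_le_of_mem_span [CharZero K] {ι : Type*} [Fintype ι]
    {f : ι → K[X]} (hcop : Pairwise (IsCoprime on f)) (hf0 : ∀ i, f i ≠ 0)
    {g : Fin k → K[X]} (hg : LinearIndependent K g)
    (hf : ∀ i, f i ∈ Submodule.span K (Set.range g)) :
    ∑ i, ((f i).roots.card - (k - 1 : ℕ) * (f i).roots.toFinset.card : ℤ) +
      ∑ j : Fin k, (j : ℕ) ≤ ∑ l, (g l).natDegree := by
  have hW := det_wronskianMatrix_ne_zero hg
  have hdvd : ∏ i, highMultiplicityPart (k - 1) (f i) ∣ (wronskianMatrix g).det := by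
    refine prod_dvd_of_coprime (fun i _ j _ hij => ?_) fun i _ =>
      dvd_det_wronskianMatrix_of_mem_span (hf i) (hf0 i) fun j hj =>
        highMultiplicityPart_dvd_iterate_derivative (by omega) _
    exact ((hcop hij).of_isCoprime_of_dvd_left (highMultiplicityPart_dvd_iterate_derivative
      (Nat.zero_le _) _)).of_isCoprime_of_dvd_right (highMultiplicityPart_dvd_iterate_derivative
      (Nat.zero_le _) _)
  have hdeg : ∑ i, (highMultiplicityPart (k - 1) (f i)).natDegree ≤
      (wronskianMatrix g).det.natDegree := by
    rw [← natDegree_prod _ _ fun i _ => highMultiplicityPart_ne_zero _ _]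
    exact natDegree_le_of_dvd hdvd hW
  have hW_le := natDegree_det_wronskianMatrix_add_le hW
  calc _ ≤ ∑ i, ((highMultiplicityPart (k - 1) (f i)).natDegree : ℤ) + ∑ j : Fin k, (j : ℕ) := by
        gcongr with i
        exact card_roots_sub_le_natDegree_highMultiplicityPart _ _
    _ ≤ ∑ l, (g l).natDegree := by exact_mod_cast (Nat.add_le_add_right hdeg _).trans hW_le

end Field

lemma ne_zero_of_pairwise_isCoprime {R ι : Type*} [CommRing R] [NoZeroDivisors R] {f : ι → R[X]}
    (hcop : Pairwise (IsCoprime on f)) (hconst : ¬ ∀ i, (f i).natDegree = 0) (i : ι) :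
    f i ≠ 0 := fun hi => hconst fun j => by
  rcases eq_or_ne j i with rfl | hj
  · simp [hi]
  · exact natDegree_eq_zero_of_isUnit (isCoprime_zero_left.mp (hi ▸ hcop hj.symm))

lemma _root_.IsCoprime.disjoint_roots_toFinset {R : Type*} [CommRing R] [IsDomain R]
    [DecidableEq R] {p q : R[X]} (h : IsCoprime p q) :
    Disjoint p.roots.toFinset q.roots.toFinset :=
  disjoint_left.mpr fun a hp hq => not_isUnit_X_sub_C a <| h.isUnit_of_dvd'
    (dvd_iff_isRoot.mpr (isRoot_of_mem_roots (Multiset.mem_toFinset.mp hp)))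
    (dvd_iff_isRoot.mpr (isRoot_of_mem_roots (Multiset.mem_toFinset.mp hq)))

end Polynomial

lemma one_le_sum_rdeg {ι : Type*} [Fintype ι] {f : ι → ℂ[X]}
    (hconst : ¬ ∀ i, (f i).natDegree = 0) : 1 ≤ ∑ i, rdeg (f i) := by
  obtain ⟨i, hi⟩ := not_forall.mp hconst
  obtain ⟨a, ha⟩ := Complex.exists_root (natDegree_pos_iff_degree_pos.mp (Nat.pos_of_ne_zero hi))
  have hroot : a ∈ (f i).roots.toFinset :=
    Multiset.mem_toFinset.mpr <|
      (mem_roots (ne_zero_of_natDegree_gt (Nat.pos_of_ne_zero hi))).mpr ha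
  exact (card_pos.mpr ⟨a, hroot⟩).trans_le
    (single_le_sum (f := fun i => rdeg (f i)) (fun _ _ => Nat.zero_le _) (mem_univ i))

lemma sum_rdeg_le_rdeg_prod {ι : Type*} [Fintype ι] {f : ι → ℂ[X]}
    (hcop : Pairwise (IsCoprime on f)) (hf0 : ∀ i, f i ≠ 0) :
    ∑ i, rdeg (f i) ≤ rdeg (∏ i, f i) := by
  have hroots : ∀ i, (f i).roots.toFinset ⊆ (∏ i, f i).roots.toFinset := fun i =>
    Multiset.toFinset_subset.mpr <| Multiset.subset_of_le <|
      roots.le_of_dvd (prod_ne_zero_iff.mpr fun i _ => hf0 i) (dvd_prod_of_mem f (mem_univ i))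
  unfold rdeg
  rw [← card_biUnion fun i _ j _ hij => (hcop hij).disjoint_roots_toFinset]
  exact card_le_card (biUnion_subset.mpr fun i _ => hroots i)

theorem stmt2_general (n : ℕ) (f : Fin n → ℂ[X])
    (hcop : ∀ i j, i ≠ j → IsCoprime (f i) (f j))
    (hconst : ¬ ∀ i, (f i).natDegree = 0)
    (hsum : ∑ i, f i = 0) :
    ∀ m, ((f m).natDegree : ℤ) ≤ ((n : ℤ) - 2) * ((rdeg (∏ i, f i) : ℤ) - 1) := by
  intro m
  have hcop' : Pairwise (IsCoprime on f) := fun i j => hcop i j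
  have hf0 := ne_zero_of_pairwise_isCoprime hcop' hconst
  obtain ⟨k, χ, hχ, hli, hmem⟩ := exists_linearIndependent_fin_of_sum_eq_zero ℂ hsum m
  have hk : 1 ≤ k := Nat.pos_of_ne_zero fun hk => hf0 m (by subst hk; simpa using hmem m)
  have hkn : k ≤ n - 1 := by simpa using Fintype.card_le_of_injective χ hχ
  have key : ∑ i, ((f i).natDegree - (k - 1 : ℕ) * rdeg (f i) : ℤ) + ∑ j : Fin k, (j : ℕ) ≤
      ∑ l, (f (χ l)).natDegree := by
    simpa only [IsAlgClosed.card_roots_eq_natDegree, rdeg] using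
      sum_card_roots_sub_add_le_of_mem_span hcop' hf0 hli hmem
  have hdeg : ∑ l, (f (χ l)).natDegree + (f m).natDegree ≤ ∑ i, (f i).natDegree := by
    rw [Fintype.sum_eq_add_sum_subtype_ne _ m, add_comm (f m).natDegree]
    gcongr
    exact (sum_map univ ⟨χ, hχ⟩ fun i => (f i).natDegree).symm.le.trans
      (sum_le_sum_of_subset (subset_univ _))
  have hT : k - 1 ≤ ∑ j : Fin k, (j : ℕ) :=
    single_le_sum (f := fun j : Fin k => (j : ℕ)) (fun _ _ => Nat.zero_le _)
      (mem_univ ⟨k - 1, by omega⟩)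
  have hr := sum_rdeg_le_rdeg_prod hcop' hf0
  have hr1 := one_le_sum_rdeg hconst
  calc ((f m).natDegree : ℤ) ≤ (k - 1 : ℕ) * ((∑ i, rdeg (f i) : ℕ) - 1 : ℤ) := by
        rw [sum_sub_distrib, ← mul_sum] at key
        zify [hk] at key hdeg hT ⊢
        linarith
    _ ≤ ((n : ℤ) - 2) * ((rdeg (∏ i, f i) : ℤ) - 1) :=
        mul_le_mul (by omega) (by omega) (by omega) (by omega)

theorem stmt2 (n : ℕ) (hn : 3 ≤ n) (f : Fin n → ℂ[X])
    (hcop : ∀ i j, i ≠ j → IsCoprime (f i) (f j))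
    (hconst : ¬ ∀ i, (f i).natDegree = 0)
    (hsum : ∑ i, f i = 0) :
    ∀ m, ((f m).natDegree : ℤ) ≤ ((n : ℤ) - 2) * ((rdeg (∏ i, f i) : ℤ) - 1) :=
  stmt2_general n f hcop hconst hsum
end

section
/- Let f, g be univariate polynomials over ℂ with f nonconstant and f³ − g² ≠ 0. Then deg(f³ − g²) ≥ (1/2)·deg f + 1. -/
/-!
Let `h = f³ - g²` and `W = W(f³, g²)`, which also equals `-W(f³, h)` and `-W(g², h)`. If `W = 0`,
then `f³` and `h` have proportional derivatives and hence equal degree `3 deg f`. Otherwise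
`f² g ∣ W`, while the Wronskian bound `deg W(a, b) < deg a + deg b` applied to `(f³, h)` and
`(g², h)` gives `deg W < 3 deg f + deg h` and `deg W < 2 deg g + deg h`; adding these and using
`deg W ≥ 2 deg f + deg g` leaves `deg f + 2 ≤ 2 deg h`.
-/

open Polynomial

namespace Polynomial

variable {R : Type*} [CommRing R]

theorem natDegree_eq_of_wronskian_eq_zero [IsDomain R] [CharZero R] {a b : R[X]}
    (ha : a ≠ 0) (hb : b ≠ 0) (hw : wronskian a b = 0) :
    a.natDegree = b.natDegree := by
  have hlc := congrArg leadingCoeff (sub_eq_zero.mp hw)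
  simp only [leadingCoeff_mul, leadingCoeff_derivative] at hlc
  have hcast : (b.natDegree : R) = a.natDegree :=
    mul_left_cancel₀ (mul_ne_zero (leadingCoeff_ne_zero.mpr ha) (leadingCoeff_ne_zero.mpr hb))
      (by linear_combination hlc)
  exact_mod_cast hcast.symm

theorem pow_mul_pow_dvd_wronskian_pow_succ (p q : R[X]) (m n : ℕ) :
    p ^ m * q ^ n ∣ wronskian (p ^ (m + 1)) (q ^ (n + 1)) :=
  Dvd.intro (C (n + 1 : R) * p * derivative q - C (m + 1 : R) * derivative p * q) <| by
    rw [wronskian, derivative_pow_succ, derivative_pow_succ]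
    ring

theorem natDegree_add_two_le_two_mul_natDegree_pow_three_sub_sq [IsDomain R] [CharZero R]
    {f g : R[X]} (hf : 0 < f.natDegree) (hne : f ^ 3 - g ^ 2 ≠ 0) :
    f.natDegree + 2 ≤ 2 * (f ^ 3 - g ^ 2).natDegree := by
  set h := f ^ 3 - g ^ 2
  set W := wronskian (f ^ 3) (g ^ 2)
  have hf0 : f ≠ 0 := ne_zero_of_natDegree_gt hf
  have hW_left : wronskian (f ^ 3) h = -W := by
    simp only [h, W, wronskian, derivative_sub]
    ring
  have hW_right : wronskian (g ^ 2) h = -W := by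
    simp only [h, W, wronskian, derivative_sub]
    ring
  by_cases hW : W = 0
  · have hdeg : (f ^ 3).natDegree = h.natDegree :=
      natDegree_eq_of_wronskian_eq_zero (pow_ne_zero 3 hf0) hne (by rw [hW_left, hW, neg_zero])
    rw [← hdeg, natDegree_pow]
    omega
  have hg0 : g ≠ 0 := by
    rintro rfl
    exact hW (by simp [W])
  have hW_lower : 2 * f.natDegree + g.natDegree ≤ W.natDegree := by
    have := natDegree_le_of_dvd (pow_mul_pow_dvd_wronskian_pow_succ f g 2 1) hW
    rwa [pow_one, natDegree_mul (pow_ne_zero 2 hf0) hg0, natDegree_pow] at this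
  have hW_upper_left : W.natDegree < 3 * f.natDegree + h.natDegree := by
    have := natDegree_wronskian_lt_add (a := f ^ 3) (b := h) (by rwa [hW_left, neg_ne_zero])
    rwa [hW_left, natDegree_neg, natDegree_pow] at this
  have hW_upper_right : W.natDegree < 2 * g.natDegree + h.natDegree := by
    have := natDegree_wronskian_lt_add (a := g ^ 2) (b := h) (by rwa [hW_right, neg_ne_zero])
    rwa [hW_right, natDegree_neg, natDegree_pow] at this
  omega

end Polynomial

theorem stmt12 (f g : ℂ[X]) (hf : 0 < f.natDegree) (hne : f ^ 3 - g ^ 2 ≠ 0) :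
    ((1 : ℚ) / 2) * (f.natDegree : ℚ) + 1 ≤ ((f ^ 3 - g ^ 2).natDegree : ℚ) := by
  have hcast : (f.natDegree : ℚ) + 2 ≤ 2 * ((f ^ 3 - g ^ 2).natDegree : ℚ) := by
    exact_mod_cast natDegree_add_two_le_two_mul_natDegree_pow_three_sub_sq hf hne
  linarith
end

section
/- Suppose f, g are univariate polynomials over ℂ with f nonconstant, f³ ≠ g², and deg(f³ − g²) = (1/2)·deg f + 1 (Davenport's bound is attained). Then gcd(f, g) = 1. -/
/-!
Let `d` be a common divisor of `f` and `g`, say `f = d f₁` and `g = d g₁`. Then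
`f³ - g² = d² (d f₁³ - g₁²)`, and Mason–Stothers applied to `d f₁³ - g₁²` (after removing the
gcd of the two terms) gives `deg (f³ - g²) > 2 deg f + deg d - deg g`. When Davenport's bound
is attained, `2 deg g = 3 deg f`, and this lower bound forces `deg d = 0`.
-/

open Polynomial UniqueFactorizationMonoid UniqueFactorizationDomain

namespace Polynomial

theorem natDegree_eq_of_natDegree_sub_lt {R : Type*} [Ring R] {p q : R[X]}
    (h : (p - q).natDegree < p.natDegree) : q.natDegree = p.natDegree := by
  by_contra hpq
  rcases Nat.lt_or_gt_of_ne hpq with hlt | hgt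
  · exact h.ne (natDegree_sub_eq_left_of_natDegree_lt hlt)
  · rw [natDegree_sub_eq_right_of_natDegree_lt hgt] at h
    omega

variable {k : Type*} [Field k] [DecidableEq k]

theorem natDegree_radical_le_of_dvd {a b : k[X]} (h : a ∣ b) (hb : b ≠ 0) :
    (radical a).natDegree ≤ (radical b).natDegree :=
  natDegree_le_of_dvd (radical_dvd_radical h hb) radical_ne_zero

theorem natDegree_radical_pos {a : k[X]} (ha : 0 < a.natDegree) : 0 < (radical a).natDegree := by
  obtain ⟨n, hn⟩ := exists_dvd_radical_self_pow (ne_zero_of_natDegree_gt ha)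
  have h := natDegree_le_of_dvd hn (pow_ne_zero n radical_ne_zero)
  rw [natDegree_pow] at h
  refine Nat.pos_of_ne_zero fun h0 => ?_
  rw [h0, mul_zero] at h
  omega

variable [CharZero k]

/-- Mason–Stothers without the coprimality assumption. -/
theorem natDegree_lt_radical_add_radical_add_natDegree_sub {a b : k[X]} (ha : 0 < a.natDegree)
    (hb : b ≠ 0) (hab : a ≠ b) :
    a.natDegree < (radical a).natDegree + (radical b).natDegree + (a - b).natDegree := by
  obtain ⟨a', b', ea, eb, hu⟩ := extract_gcd a b
  set D := gcd a b
  have ha0 : a ≠ 0 := ne_zero_of_natDegree_gt ha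
  have hD : D ≠ 0 := fun h => ha0 (by rw [ea, h, zero_mul])
  have ha' : a' ≠ 0 := fun h => ha0 (by rw [ea, h, mul_zero])
  have hb' : b' ≠ 0 := fun h => hb (by rw [eb, h, mul_zero])
  have hsub : a - b = D * (a' - b') := by rw [ea, eb, mul_sub]
  have hc' : a' - b' ≠ 0 := fun h => sub_ne_zero.2 hab (by rw [hsub, h, mul_zero])
  have hdeg_a : a.natDegree = D.natDegree + a'.natDegree := by rw [ea, natDegree_mul hD ha']
  have hdeg_sub : (a - b).natDegree = D.natDegree + (a' - b').natDegree := by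
    rw [hsub, natDegree_mul hD hc']
  have hc'' : b' - a' ≠ 0 := by rwa [← neg_sub, neg_ne_zero]
  rcases Polynomial.abc ha' (neg_ne_zero.2 hb') hc'' ((gcd_isUnit_iff a' b').1 hu).neg_right
    (by ring) with ⟨h, -, -⟩ | ⟨ha'0, -, hc'0⟩
  · have hrad : (radical (a' * -b' * (b' - a'))).natDegree ≤
        (radical a).natDegree + (radical b).natDegree + (a' - b').natDegree :=
      calc (radical (a' * -b' * (b' - a'))).natDegree
          ≤ (radical a' * radical (-b') * radical (b' - a')).natDegree :=
            natDegree_le_of_dvd (radical_mul_dvd.trans (mul_dvd_mul_right radical_mul_dvd _))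
              (by simp [radical_ne_zero])
        _ = (radical a').natDegree + (radical b').natDegree + (radical (a' - b')).natDegree := by
            rw [natDegree_mul (by simp [radical_ne_zero]) radical_ne_zero,
              natDegree_mul radical_ne_zero radical_ne_zero, radical_neg, ← neg_sub, radical_neg]
        _ ≤ (radical a).natDegree + (radical b).natDegree + (a' - b').natDegree := by
            gcongr
            · exact natDegree_radical_le_of_dvd (Dvd.intro_left D ea.symm) ha0
            · exact natDegree_radical_le_of_dvd (Dvd.intro_left D eb.symm) hb
            · exact natDegree_radical_le
    omega
  · -- in characteristic zero `a'` and `a' - b'` are then constants, so `deg a = deg (a - b)`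
    have h1 := derivative_eq_zero.1 ha'0
    have h2 := derivative_eq_zero.1 hc'0
    rw [← neg_sub, natDegree_neg] at h2
    have := natDegree_radical_pos ha
    omega

theorem davenport_of_dvd {f g d : k[X]} (hdf : d ∣ f) (hdg : d ∣ g) (hf : 0 < f.natDegree)
    (hg : g ≠ 0) (hne : f ^ 3 ≠ g ^ 2) :
    2 * f.natDegree + d.natDegree < g.natDegree + (f ^ 3 - g ^ 2).natDegree := by
  obtain ⟨f₁, rfl⟩ := hdf
  obtain ⟨g₁, rfl⟩ := hdg
  have hf0 : d * f₁ ≠ 0 := ne_zero_of_natDegree_gt hf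
  have hd : d ≠ 0 := left_ne_zero_of_mul hf0
  have hf₁ : f₁ ≠ 0 := right_ne_zero_of_mul hf0
  have hg₁ : g₁ ≠ 0 := right_ne_zero_of_mul hg
  have hsub : (d * f₁) ^ 3 - (d * g₁) ^ 2 = d ^ 2 * (d * f₁ ^ 3 - g₁ ^ 2) := by ring
  have hc : d * f₁ ^ 3 - g₁ ^ 2 ≠ 0 := right_ne_zero_of_mul (hsub ▸ sub_ne_zero.2 hne)
  have hdeg_f : (d * f₁).natDegree = d.natDegree + f₁.natDegree := natDegree_mul hd hf₁
  have hdeg_g : (d * g₁).natDegree = d.natDegree + g₁.natDegree := natDegree_mul hd hg₁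
  have hdeg_A : (d * f₁ ^ 3).natDegree = d.natDegree + 3 * f₁.natDegree := by
    rw [natDegree_mul hd (pow_ne_zero 3 hf₁), natDegree_pow]
  have hdeg_sub : ((d * f₁) ^ 3 - (d * g₁) ^ 2).natDegree =
      2 * d.natDegree + (d * f₁ ^ 3 - g₁ ^ 2).natDegree := by
    rw [hsub, natDegree_mul (pow_ne_zero 2 hd) hc, natDegree_pow]
  have hrad_A : (radical (d * f₁ ^ 3)).natDegree ≤ (d * f₁).natDegree :=
    natDegree_le_of_dvd ((radical_dvd_radical ⟨d ^ 2, by ring⟩ (pow_ne_zero 3 hf0)).trans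
      (radical_pow_dvd.trans radical_dvd_self)) hf0
  have hrad_B : (radical (g₁ ^ 2)).natDegree ≤ g₁.natDegree := by
    rw [radical_pow _ two_ne_zero]
    exact natDegree_radical_le
  have := natDegree_lt_radical_add_radical_add_natDegree_sub (by omega) (pow_ne_zero 2 hg₁)
    (sub_ne_zero.1 hc)
  omega

end Polynomial

theorem stmt13 (f g : ℂ[X]) (hf : 0 < f.natDegree) (hne : f ^ 3 ≠ g ^ 2)
    (heq : (((f ^ 3 - g ^ 2).natDegree : ℚ)) = ((1 : ℚ) / 2) * (f.natDegree : ℚ) + 1) :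
    IsCoprime f g := by
  have hE : 2 * (f ^ 3 - g ^ 2).natDegree = f.natDegree + 2 := by
    have h : ((2 * (f ^ 3 - g ^ 2).natDegree : ℕ) : ℚ) = ((f.natDegree + 2 : ℕ) : ℚ) := by
      push_cast
      linarith
    exact_mod_cast h
  have hg : 2 * g.natDegree = 3 * f.natDegree := by
    have h := natDegree_eq_of_natDegree_sub_lt (p := f ^ 3) (q := g ^ 2)
      (by rw [natDegree_pow]; omega)
    rw [natDegree_pow, natDegree_pow] at h
    omega
  have hg0 : g ≠ 0 := by
    rintro rfl
    simp only [natDegree_zero, mul_zero] at hg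
    omega
  refine EuclideanDomain.isCoprime_of_dvd (fun h => hg0 h.2) fun d hd hd0 hdf hdg => ?_
  have hdeg := davenport_of_dvd hdf hdg hf hg0 hne
  have hdpos := natDegree_pos_iff_degree_pos.2 (degree_pos_of_ne_zero_of_nonunit hd0 hd)
  omega
end

section
/- Suppose f, g are univariate polynomials over ℂ with f nonconstant and deg(f³ − g²) = (1/2)·deg f + 1. Then for every λ, μ ∈ ℂ with λμ ≠ 0, the polynomial λf³ + μg² is square-free. -/
/-!
Put `h = f³ - g²` and `n = deg f`, so that `deg h = n/2 + 1` and `deg g = 3n/2`. The Wronskian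
`W(f³, h) = W(g², f³) = f² g T`, with `T = 3 f' g - 2 f g'`, is nonzero because `deg f³ ≠ deg h`,
and has degree `< deg f³ + deg h = deg (f² g) + 1`; hence `T` is a nonzero constant, and since `T`
lies in the ideal `(f, g)`, the polynomials `f` and `g` are coprime. A repeated factor of
`P = λ f³ + μ g²` divides `P` and `P'`, hence `W(g², P) = λ f² g T`, hence `f` or `g`; through `P`
it then divides both, which is impossible.
-/

open Polynomial

namespace Polynomial

section CommRing

variable {R : Type*} [CommRing R]

theorem separable_of_isCoprime_wronskian {P Q : R[X]} (h : IsCoprime P (wronskian Q P)) :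
    P.Separable := by
  rw [wronskian, sub_eq_add_neg, ← neg_mul] at h
  exact (separable_def P).mpr h.of_add_mul_right_right.of_mul_right_right

theorem coeff_X_mul_derivative (p : R[X]) (n : ℕ) :
    (X * derivative p).coeff n = n * p.coeff n := by
  cases n with
  | zero => simp
  | succ n => rw [coeff_X_mul, coeff_derivative, mul_comm]; push_cast; rfl

theorem natDegree_X_mul_derivative_le (p : R[X]) : (X * derivative p).natDegree ≤ p.natDegree :=
  natDegree_le_iff_coeff_eq_zero.mpr fun n hn => by
    rw [coeff_X_mul_derivative, coeff_eq_zero_of_natDegree_lt (by exact_mod_cast hn), mul_zero]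

noncomputable def cubeSqCofactor (f g : R[X]) : R[X] :=
  C 3 * derivative f * g - C 2 * f * derivative g

theorem wronskian_sq_pow_three (f g : R[X]) :
    wronskian (g ^ 2) (f ^ 3) = f ^ 2 * g * cubeSqCofactor f g := by
  simp only [wronskian, cubeSqCofactor, derivative_pow]
  norm_num
  ring

theorem isCoprime_of_isUnit_cubeSqCofactor {f g : R[X]} (h : IsUnit (cubeSqCofactor f g)) :
    IsCoprime f g := by
  obtain ⟨v, hv⟩ := h.exists_left_inv
  exact ⟨-(v * C 2 * derivative g), v * C 3 * derivative f, by rw [← hv, cubeSqCofactor]; ring⟩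

end CommRing

variable {K : Type*} [Field K]

theorem isUnit_cubeSqCofactor_of_natDegree_sub_eq [CharZero K] {f g : K[X]} (hf : 0 < f.natDegree)
    (hdeg : 2 * (f ^ 3 - g ^ 2).natDegree = f.natDegree + 2) : IsUnit (cubeSqCofactor f g) := by
  set h := f ^ 3 - g ^ 2 with hh
  have hf0 : f ≠ 0 := ne_zero_of_natDegree_gt hf
  have hh0 : h ≠ 0 := ne_zero_of_natDegree_gt (n := 0) (by omega)
  have hg : 2 * g.natDegree = 3 * f.natDegree := by
    have hsub : (f ^ 3 - h).natDegree = (f ^ 3).natDegree :=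
      natDegree_sub_eq_left_of_natDegree_lt (by rw [natDegree_pow]; omega)
    rw [hh, sub_sub_cancel, natDegree_pow, natDegree_pow] at hsub
    omega
  have hg0 : g ≠ 0 := ne_zero_of_natDegree_gt (n := 0) (by omega)
  have hW : wronskian (f ^ 3) h = f ^ 2 * g * cubeSqCofactor f g := by
    rw [← wronskian_sq_pow_three, hh, sub_eq_add_neg, wronskian_add_right, wronskian_self_eq_zero,
      wronskian_neg_right, zero_add, wronskian_neg_eq]
  have hW0 : wronskian (f ^ 3) h ≠ 0 := fun hw => by
    have hdeg_eq := natDegree_eq_of_wronskian_eq_zero (pow_ne_zero 3 hf0) hh0 hw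
    rw [natDegree_pow] at hdeg_eq
    omega
  have hT0 : cubeSqCofactor f g ≠ 0 := right_ne_zero_of_mul (hW ▸ hW0)
  have hlt := natDegree_wronskian_lt_add hW0
  rw [hW, natDegree_mul (mul_ne_zero (pow_ne_zero 2 hf0) hg0) hT0,
    natDegree_mul (pow_ne_zero 2 hf0) hg0, natDegree_pow, natDegree_pow] at hlt
  have hT : (cubeSqCofactor f g).natDegree = 0 := by omega
  exact isUnit_iff_degree_eq_zero.mpr ((degree_eq_iff_natDegree_eq hT0).mpr hT)

theorem separable_C_mul_pow_three_add_C_mul_sq {f g : K[X]} (hfg : IsUnit (cubeSqCofactor f g))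
    {a b : K} (ha : a ≠ 0) (hb : b ≠ 0) : (C a * f ^ 3 + C b * g ^ 2).Separable := by
  have hcop := isCoprime_of_isUnit_cubeSqCofactor hfg
  have hW : wronskian (g ^ 2) (C a * f ^ 3 + C b * g ^ 2) =
      C a * (f ^ 2 * g * cubeSqCofactor f g) := by
    rw [← wronskian_sq_pow_three]
    simp only [wronskian, derivative_add, derivative_C_mul]
    ring
  apply separable_of_isCoprime_wronskian (Q := g ^ 2)
  rw [hW, isCoprime_mul_unit_left_right (isUnit_C.mpr ha.isUnit),
    isCoprime_mul_unit_right_right hfg]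
  refine IsCoprime.mul_right (IsCoprime.pow_right ?_) ?_
  · have hcop' : IsCoprime (C b * g ^ 2) f :=
      (isCoprime_mul_unit_left_left (isUnit_C.mpr hb.isUnit) _ _).mpr hcop.symm.pow_left
    rw [show C a * f ^ 3 + C b * g ^ 2 = C b * g ^ 2 + f * (C a * f ^ 2) by ring]
    exact hcop'.add_mul_left_left _
  · have hcop' : IsCoprime (C a * f ^ 3) g :=
      (isCoprime_mul_unit_left_left (isUnit_C.mpr ha.isUnit) _ _).mpr hcop.pow_left
    rw [show C a * f ^ 3 + C b * g ^ 2 = C a * f ^ 3 + g * (C b * g) by ring]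
    exact hcop'.add_mul_left_left _

end Polynomial

theorem stmt14 (f g : ℂ[X]) (hf : 0 < f.natDegree)
    (heq : (((f ^ 3 - g ^ 2).natDegree : ℚ)) = ((1 : ℚ) / 2) * (f.natDegree : ℚ) + 1) :
    ∀ lam mu : ℂ, lam * mu ≠ 0 → Squarefree (C lam * f ^ 3 + C mu * g ^ 2) := by
  intro lam mu hlm
  have hdeg : 2 * (f ^ 3 - g ^ 2).natDegree = f.natDegree + 2 := by
    have hdegℚ : ((2 * (f ^ 3 - g ^ 2).natDegree : ℕ) : ℚ) = (f.natDegree + 2 : ℕ) := by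
      push_cast; linarith
    exact_mod_cast hdegℚ
  have hT := isUnit_cubeSqCofactor_of_natDegree_sub_eq hf hdeg
  exact (separable_C_mul_pow_three_add_C_mul_sq hT (left_ne_zero_of_mul hlm)
    (right_ne_zero_of_mul hlm)).squarefree
end
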